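/- arXiv:0811.1322 — 2 statements merged into one kernel-verified Lean document; each statement's English description precedes it below -/
import Mathlib

section
/- Let r ≥ 1 be an integer and suppose the sets B, C ⊆ G in the elementary abelian 2-group G of rank r are disjoint and non-empty. If |B| + |C| > 2^(r-1), then the union B ∪ C is not disjoint from the sumset B + C; that is, (B ∪ C) ∩ (B + C) ≠ ∅. -/
open Pointwise

private lemma two_torsion {r : ℕ} (x : Fin r → ZMod 2) : x + x = 0 := by
  funext i
  have h : ∀ a : ZMod 2, a + a = 0 := by decide
  exact h (x i)

private lemma card_G (r : ℕ) : Nat.card (Fin r → ZMod 2) = 2 ^ r := by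
  simp [Nat.card_eq_fintype_card]

private lemma aux (r : ℕ) (hr : 1 ≤ r) (B C : Set (Fin r → ZMod 2))
    (hBne : B.Nonempty) (hdisj : B ∩ C = ∅)
    (hsize : 2 ^ (r - 1) < B.ncard + C.ncard)
    (hle : B.ncard ≤ C.ncard)
    (hE : (B ∪ C) ∩ (B + C) = ∅) : False := by
  classical
  have hfin : ∀ s : Set (Fin r → ZMod 2), s.Finite := fun s => s.toFinite
  -- no element of B+C lies in B ∪ C
  have hno : ∀ x ∈ B + C, x ∉ B ∪ C := by
    intro x hx hxD
    have : x ∈ (B ∪ C) ∩ (B + C) := ⟨hxD, hx⟩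
    rw [hE] at this; exact this
  have hnoCC : ∀ c1 ∈ C, ∀ c2 ∈ C, ∀ b ∈ B, b ≠ c1 + c2 := by
    intro c1 hc1 c2 hc2 b hb heq
    have h1 : b + c1 ∈ B + C := Set.add_mem_add hb hc1
    have h2 : b + c1 = c2 := by linear_combination heq + two_torsion c1
    exact hno _ h1 (Or.inr (h2 ▸ hc2))
  -- cardinality facts
  have hG : (Set.univ : Set (Fin r → ZMod 2)).ncard = 2 ^ r := by
    rw [Set.ncard_univ, card_G]
  have hpow : (2:ℕ) ^ r = 2 * 2 ^ (r - 1) := by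
    conv_lhs => rw [show r = 1 + (r - 1) by omega]
    ring
  have hBCdisj : Disjoint B C := Set.disjoint_iff_inter_eq_empty.2 hdisj
  have hDS : Disjoint (B ∪ C) (B + C) := Set.disjoint_iff_inter_eq_empty.2 hE
  have hsum : (B ∪ C).ncard = B.ncard + C.ncard :=
    Set.ncard_union_eq hBCdisj (hfin _) (hfin _)
  have htot : B.ncard + C.ncard + (B + C).ncard ≤ 2 ^ r := by
    have h1 : ((B ∪ C) ∪ (B + C)).ncard = (B ∪ C).ncard + (B + C).ncard :=
      Set.ncard_union_eq hDS (hfin _) (hfin _)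
    have h2 : ((B ∪ C) ∪ (B + C)).ncard ≤ (Set.univ : Set (Fin r → ZMod 2)).ncard :=
      Set.ncard_le_ncard (Set.subset_univ _) (hfin _)
    rw [hG] at h2
    linarith [hsum, h1]
  have hSC : (B + C).ncard < 2 * C.ncard := by linarith
  -- translate cardinalities
  have htrans : ∀ (b : Fin r → ZMod 2) (s : Set (Fin r → ZMod 2)),
      ({b} + s).ncard = s.ncard := by
    intro b s
    rw [Set.singleton_add]
    exact Set.ncard_image_of_injective _ (add_right_injective b)
  have hsub1 : ∀ b ∈ B, {b} + C ⊆ B + C := by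
    intro b hb x hx
    rw [Set.mem_add] at hx ⊢
    obtain ⟨a, ha, c, hc, h⟩ := hx
    rw [Set.mem_singleton_iff] at ha
    exact ⟨b, hb, c, hc, by rw [← ha]; exact h⟩
  -- B + B ⊆ C + C
  have hBB : ∀ b1 ∈ B, ∀ b2 ∈ B, ∃ c1 ∈ C, ∃ c2 ∈ C, b1 + b2 = c1 + c2 := by
    intro b1 hb1 b2 hb2
    rcases Set.eq_empty_or_nonempty (({b1} + C) ∩ ({b2} + C)) with he | ⟨x, hx1, hx2⟩
    · exfalso
      have hd : Disjoint ({b1} + C) ({b2} + C) := Set.disjoint_iff_inter_eq_empty.2 he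
      have h1 : (({b1} + C) ∪ ({b2} + C)).ncard = ({b1} + C).ncard + ({b2} + C).ncard :=
        Set.ncard_union_eq hd (hfin _) (hfin _)
      have h2 : (({b1} + C) ∪ ({b2} + C)).ncard ≤ (B + C).ncard :=
        Set.ncard_le_ncard (Set.union_subset (hsub1 b1 hb1) (hsub1 b2 hb2)) (hfin _)
      rw [htrans, htrans] at h1
      linarith
    · rw [Set.mem_add] at hx1 hx2
      obtain ⟨a1, ha1, c1, hc1, h1⟩ := hx1
      obtain ⟨a2, ha2, c2, hc2, h2⟩ := hx2
      rw [Set.mem_singleton_iff] at ha1 ha2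
      rw [ha1] at h1; rw [ha2] at h2
      exact ⟨c1, hc1, c2, hc2, by
        linear_combination h1 - h2 + two_torsion b2 - two_torsion c1⟩
  -- pigeonhole: b0 ∈ D + D
  obtain ⟨b0, hb0⟩ := hBne
  rcases Set.eq_empty_or_nonempty ((B ∪ C) ∩ ({b0} + (B ∪ C))) with he | ⟨x, hxD, hxT⟩
  · have hd : Disjoint (B ∪ C) ({b0} + (B ∪ C)) := Set.disjoint_iff_inter_eq_empty.2 he
    have h1 : ((B ∪ C) ∪ ({b0} + (B ∪ C))).ncard
        = (B ∪ C).ncard + ({b0} + (B ∪ C)).ncard :=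
      Set.ncard_union_eq hd (hfin _) (hfin _)
    have h2 : ((B ∪ C) ∪ ({b0} + (B ∪ C))).ncard ≤ (Set.univ : Set (Fin r → ZMod 2)).ncard :=
      Set.ncard_le_ncard (Set.subset_univ _) (hfin _)
    rw [hG] at h2
    rw [htrans, hsum] at h1
    linarith
  · rw [Set.mem_add] at hxT
    obtain ⟨a, ha, d, hd, h⟩ := hxT
    rw [Set.mem_singleton_iff] at ha
    rw [ha] at h
    -- b0 = x + d
    have hb0eq : b0 = x + d := by linear_combination h - two_torsion d
    rcases hxD with hxB | hxC <;> rcases hd with hdB | hdC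
    · -- x ∈ B, d ∈ B : b0 ∈ B+B ⊆ C+C
      obtain ⟨c1, hc1, c2, hc2, hcc⟩ := hBB x hxB d hdB
      exact hnoCC c1 hc1 c2 hc2 b0 hb0 (by rw [hb0eq, hcc])
    · -- x ∈ B, d ∈ C : b0 ∈ B + C
      have : b0 ∈ B + C := hb0eq ▸ Set.add_mem_add hxB hdC
      exact hno _ this (Or.inl hb0)
    · -- x ∈ C, d ∈ B : b0 ∈ B + C
      have : b0 ∈ B + C := by
        rw [hb0eq, add_comm x d]
        exact Set.add_mem_add hdB hxC
      exact hno _ this (Or.inl hb0)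
    · -- x ∈ C, d ∈ C : b0 ∈ C + C
      exact hnoCC x hxC d hdC b0 hb0 hb0eq

/-- **Corollary (of Kneser's theorem).** Let `r ≥ 1` and suppose `B, C ⊆ G = Fin r → ZMod 2`
are disjoint and non-empty. If `|B| + |C| > 2^(r-1)`, then `B ∪ C` is not disjoint from the
sumset `B + C`. -/
theorem stmt_10 (r : ℕ) (hr : 1 ≤ r) (B C : Set (Fin r → ZMod 2))
    (hBne : B.Nonempty) (hCne : C.Nonempty) (hdisj : B ∩ C = ∅)
    (hsize : 2 ^ (r - 1) < B.ncard + C.ncard) :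
    ((B ∪ C) ∩ (B + C)).Nonempty := by
  by_contra hne
  rw [Set.not_nonempty_iff_eq_empty] at hne
  rcases le_total B.ncard C.ncard with h | h
  · exact aux r hr B C hBne hdisj hsize h hne
  · refine aux r hr C B hCne (by rw [Set.inter_comm]; exact hdisj)
      (by linarith) h ?_
    rw [Set.union_comm, add_comm C B]
    exact hne
end

section
/- Let r ≥ 1 be an integer. If A ⊆ G is a round subset of the elementary abelian 2-group G of rank r with |A| > 2^(r-2) + 3, then the matching number of the graph Γ(A) is not equal to 2. -/
open Pointwise

/-- `urep A` is the set `D(A)` of elements of the group having exactly one representation,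
up to the order of summands, as a sum of two elements of `A`. -/
def urep {G : Type*} [AddCommGroup G] (A : Set G) : Set G :=
  {d | ∃ a₁ ∈ A, ∃ a₂ ∈ A, a₁ + a₂ = d ∧
    ∀ b₁ ∈ A, ∀ b₂ ∈ A, b₁ + b₂ = d → (b₁ = a₁ ∧ b₂ = a₂) ∨ (b₁ = a₂ ∧ b₂ = a₁)}

/-- `gam A` is the unique representation graph `Γ(A)`: vertices are elements of `A`, and
distinct `a₁, a₂ ∈ A` are adjacent iff `a₁ + a₂ ∈ D(A)` (elements outside `A` are isolated). -/
def gam {G : Type*} [AddCommGroup G] (A : Set G) : SimpleGraph G :=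
  SimpleGraph.fromRel (fun x y => x ∈ A ∧ y ∈ A ∧ x + y ∈ urep A)

/-!
If `Γ(A)` has a matching `{a b, c d}` but no matching of size three, every edge of `Γ(A)` meets
`{a, b, c, d}`, and one can pick `α ∈ {a, b}`, `γ ∈ {c, d}` such that every non-isolated vertex
other than `α, γ` is adjacent to `α` or `γ`. Roundness makes every vertex of `A` non-isolated, so
`S = A \ {α, γ}` splits as `L₁ ⊔ L₂` with `α + L₁, γ + L₂ ⊆ D(A)`, both parts nonempty. Uniqueness
of these representations shows that `S` misses `α + γ + S` and that `L₁ + L₂` misses `S + {α, γ}`.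
Hence `X = {α, γ} + L₁` and `Y = {α, γ} + L₂` are disjoint, of sizes `2|L₁|` and `2|L₂|`, and
`X + Y` misses `X ∪ Y`.

For such a pair `X, Y` in an elementary abelian 2-group `H` one has `2(|X| + |Y|) ≤ |H|`, by
induction on `|H|`: if `X` or `Y` lies in an affine hyperplane `f = 1`, translating the part of
`X` with `f = 0` by an element of `Y` packs `X ∪ Y` injectively into `f = 1`; otherwise `X` and `Y`
meet every hyperplane through `0`, the induction hypothesis bounds `X ∪ Y` inside each of them by
`|H| / 4`, and averaging over all hyperplanes gives the bound. So `4 (|A| - 2) ≤ 2 ^ r`.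
-/

open Finset

lemma zmod_two_eq_zero_or_eq_one (z : ZMod 2) : z = 0 ∨ z = 1 := by
  revert z
  decide

lemma zmod_two_eq_one_of_ne_zero {z : ZMod 2} (hz : z ≠ 0) : z = 1 :=
  (zmod_two_eq_zero_or_eq_one z).resolve_left hz

lemma zmod_two_eq_zero_of_ne_one {z : ZMod 2} (hz : z ≠ 1) : z = 0 :=
  (zmod_two_eq_zero_or_eq_one z).resolve_right hz

lemma two_mul_ncard_setOf_apply_eq {G : Type*} [AddCommGroup G] [Finite G] (f : G →+ ZMod 2)
    (hf : ∃ x, f x = 1) (c : ZMod 2) : 2 * {x | f x = c}.ncard = Nat.card G := by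
  classical
  have := Fintype.ofFinite G
  have hfibers : #{x | f x = 0} = #{x | f x = 1} :=
    AddMonoidHom.card_fiber_eq_of_mem_range f ⟨0, map_zero f⟩ hf
  have hsplit : #{x | f x = 0} + #{x | f x = 1} = Fintype.card G := by
    have hne : ∀ x, ¬ f x = 0 ↔ f x = 1 := fun x =>
      ⟨zmod_two_eq_one_of_ne_zero, fun h => h ▸ one_ne_zero⟩
    rw [← card_univ, ← card_filter_add_card_filter_not (s := univ) (fun x => f x = 0)]
    simp_rw [hne]
  rw [Set.ncard_eq_toFinset_card', Set.toFinset_ofPred, Nat.card_eq_fintype_card]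
  obtain rfl | rfl := zmod_two_eq_zero_or_eq_one c <;> omega

lemma zero_notMem_union_of_add_notMem {G : Type*} [AddCommGroup G] {X Y : Set G}
    (hX : X.Nonempty) (hY : Y.Nonempty) (hsum : ∀ x ∈ X, ∀ y ∈ Y, x + y ∉ X ∪ Y) :
    (0 : G) ∉ X ∪ Y := by
  obtain ⟨x, hx⟩ := hX
  obtain ⟨y, hy⟩ := hY
  rintro (h0 | h0)
  · exact hsum 0 h0 y hy (by simp [hy])
  · exact hsum x hx 0 h0 (by simp [hx])

namespace ZModModule

variable {G : Type*} [AddCommGroup G] [Module (ZMod 2) G]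

lemma add_add_cancel_left (a b : G) : a + (a + b) = b := by
  rw [← add_assoc, add_self, zero_add]

lemma add_eq_add_iff_add_eq_add {a b c d : G} : a + b = c + d ↔ a + c = b + d := by
  rw [← sub_eq_zero, ← sub_eq_zero (a := a + c), sub_eq_add, sub_eq_add]
  constructor <;> intro h <;> rw [← h] <;> abel

end ZModModule

section Hyperplanes

variable {H : Type*} [AddCommGroup H] [Module (ZMod 2) H]

lemma exists_dual_apply_eq_one {w : H} (hw : w ≠ 0) : ∃ f : Module.Dual (ZMod 2) H, f w = 1 := by
  obtain ⟨f, hf⟩ := not_forall.mp (mt (Module.forall_dual_apply_eq_zero_iff (ZMod 2) w).mp hw)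
  exact ⟨f, zmod_two_eq_one_of_ne_zero hf⟩

lemma exists_apply_eq_one_of_ne_zero {f : Module.Dual (ZMod 2) H} (hf : f ≠ 0) :
    ∃ x, f x = 1 := by
  obtain ⟨x, hx⟩ : ∃ x, f x ≠ 0 := by
    by_contra! h
    exact hf (LinearMap.ext fun x => by simp [h])
  exact ⟨x, zmod_two_eq_one_of_ne_zero hx⟩

lemma ncard_preimage_subtype_val_ker (f : Module.Dual (ZMod 2) H) (S : Set H) :
    (Subtype.val ⁻¹' S : Set (LinearMap.ker f)).ncard = {x ∈ S | f x = 0}.ncard := by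
  rw [← Set.ncard_preimage_of_injective_subset_range (s := {x ∈ S | f x = 0})
    Subtype.val_injective fun x hx => ⟨⟨x, hx.2⟩, rfl⟩]
  congr 1
  ext x
  simp only [Set.mem_preimage]
  exact (and_iff_left (LinearMap.mem_ker.mp x.2)).symm

variable [Finite H]

instance : Finite (Module.Dual (ZMod 2) H) := Module.finite_of_finite (ZMod 2)

lemma nat_card_dual : Nat.card (Module.Dual (ZMod 2) H) = Nat.card H :=
  (Nat.card_congr (Module.finBasis (ZMod 2) H).toDualEquiv.toEquiv).symm

lemma two_mul_nat_card_ker {f : Module.Dual (ZMod 2) H} (hf : f ≠ 0) :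
    2 * Nat.card (LinearMap.ker f) = Nat.card H :=
  two_mul_ncard_setOf_apply_eq f.toAddMonoidHom (exists_apply_eq_one_of_ne_zero hf) 0

lemma two_mul_ncard_setOf_dual_apply_eq_zero {w : H} (hw : w ≠ 0) :
    2 * {f : Module.Dual (ZMod 2) H | f w = 0}.ncard = Nat.card H := by
  rw [← nat_card_dual]
  exact two_mul_ncard_setOf_apply_eq (Module.Dual.eval (ZMod 2) H w).toAddMonoidHom
    (exists_dual_apply_eq_one hw) 0

lemma two_mul_ncard_le_of_forall_ker {W : Set H} (h0 : (0 : H) ∉ W) (hN : 6 ≤ Nat.card H)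
    (hW : ∀ f : Module.Dual (ZMod 2) H, f ≠ 0 → 4 * {w ∈ W | f w = 0}.ncard ≤ Nat.card H) :
    2 * W.ncard ≤ Nat.card H := by
  classical
  have := Fintype.ofFinite (Module.Dual (ZMod 2) H)
  have := Fintype.ofFinite H
  obtain ⟨w₀, hw₀⟩ | hempty := W.eq_empty_or_nonempty.symm
  swap; · simp [hempty]
  set F : Finset (Module.Dual (ZMod 2) H) := univ.erase 0
  have hF : #F + 1 = Nat.card H := by
    rw [card_erase_add_one (mem_univ _), card_univ, ← Nat.card_eq_fintype_card, nat_card_dual]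
  have hker : ∀ w ∈ W, 2 * (#{f ∈ F | f w = 0} + 1) = Nat.card H := by
    intro w hw
    rw [← two_mul_ncard_setOf_dual_apply_eq_zero (ne_of_mem_of_not_mem hw h0),
      Set.ncard_eq_toFinset_card', Set.toFinset_ofPred, filter_erase,
      card_erase_add_one (by simp)]
  obtain ⟨m, hm⟩ : ∃ m, Nat.card H = 2 * (m + 1) := ⟨_, (hker w₀ hw₀).symm⟩
  have hdouble : ∑ f ∈ F, #{w ∈ W.toFinset | f w = 0} = W.ncard * m := by
    have h := sum_card_bipartiteAbove_eq_sum_card_bipartiteBelow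
      (fun (w : H) (f : Module.Dual (ZMod 2) H) => f w = 0) (s := W.toFinset) (t := F)
    simp only [bipartiteAbove, bipartiteBelow] at h
    rw [← h, Set.ncard_eq_toFinset_card']
    exact sum_const_nat fun w hw => by have := hker w (Set.mem_toFinset.mp hw); omega
  have hbound : 4 * ∑ f ∈ F, #{w ∈ W.toFinset | f w = 0} ≤ #F * Nat.card H := by
    rw [mul_sum]
    refine (sum_le_sum fun f hf => ?_).trans_eq (by rw [sum_const, smul_eq_mul])
    have hcoe : {w ∈ W | f w = 0} = ↑({w ∈ W.toFinset | f w = 0} : Finset H) := by ext; simp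
    simpa only [hcoe, Set.ncard_coe_finset] using hW f (ne_of_mem_erase hf)
  rw [hdouble, show #F = 2 * m + 1 by omega, hm] at hbound
  rw [hm] at hN ⊢
  by_contra! hlt
  have hmul : (m + 2) * m ≤ W.ncard * m := Nat.mul_le_mul_right m (by omega)
  nlinarith

lemma two_mul_ncard_add_ncard_le_of_forall_apply_eq_one (f : Module.Dual (ZMod 2) H)
    {X Y : Set H} (hY : Y.Nonempty) (hfY : ∀ y ∈ Y, f y = 1) (hXY : Disjoint X Y)
    (hsum : ∀ x ∈ X, ∀ y ∈ Y, x + y ∉ X ∪ Y) :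
    2 * (X.ncard + Y.ncard) ≤ Nat.card H := by
  obtain ⟨y₀, hy₀⟩ := hY
  have hX : ∀ x ∈ X ∪ Y, f x ≠ 1 → x ∈ X := fun x hx hfx =>
    hx.resolve_right fun hxY => hfx (hfY x hxY)
  -- Points of `X` off the affine hyperplane `f = 1` are moved onto it by `y₀`.
  let φ : H → H := fun x => if f x = 1 then x else x + y₀
  have hmaps : Set.MapsTo φ (X ∪ Y) {x | f x = 1} := by
    intro x _
    by_cases hfx : f x = 1
    · simp [φ, hfx]
    · simp [φ, zmod_two_eq_zero_of_ne_one hfx, hfY y₀ hy₀]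
  have hinj : Set.InjOn φ (X ∪ Y) := by
    intro x hx x' hx' h
    by_cases hfx : f x = 1 <;> by_cases hfx' : f x' = 1 <;>
      simp only [φ, hfx, hfx', if_true, if_false] at h
    · exact h
    · exact absurd (h ▸ hx) (hsum x' (hX x' hx' hfx') y₀ hy₀)
    · exact absurd (h ▸ hx') (hsum x (hX x hx hfx) y₀ hy₀)
    · exact add_right_cancel h
  have hcard := two_mul_ncard_setOf_apply_eq f.toAddMonoidHom ⟨y₀, hfY y₀ hy₀⟩ 1
  rw [← Set.ncard_union_eq hXY]
  exact (Nat.mul_le_mul_left 2 (Set.ncard_le_ncard_of_injOn φ hmaps hinj)).trans_eq hcard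

theorem two_mul_ncard_add_ncard_le {X Y : Set H} (hX : X.Nonempty) (hY : Y.Nonempty)
    (hXY : Disjoint X Y) (hsum : ∀ x ∈ X, ∀ y ∈ Y, x + y ∉ X ∪ Y) :
    2 * (X.ncard + Y.ncard) ≤ Nat.card H := by
  obtain ⟨N, hN⟩ : ∃ N, Nat.card H = N := ⟨_, rfl⟩
  induction N using Nat.strong_induction_on generalizing H with
  | _ N ih =>
  by_cases hslice : ∃ f : Module.Dual (ZMod 2) H, (∀ y ∈ Y, f y = 1) ∨ (∀ x ∈ X, f x = 1)
  · obtain ⟨f, hfY | hfX⟩ := hslice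
    · exact two_mul_ncard_add_ncard_le_of_forall_apply_eq_one f hY hfY hXY hsum
    · rw [add_comm, Set.union_comm] at *
      refine two_mul_ncard_add_ncard_le_of_forall_apply_eq_one f hX hfX hXY.symm
        fun y hy x hx => ?_
      rw [add_comm]
      exact hsum x hx y hy
  push Not at hslice
  have h0 := zero_notMem_union_of_add_notMem hX hY hsum
  have hker : ∀ f : Module.Dual (ZMod 2) H, f ≠ 0 →
      2 ≤ {w ∈ X ∪ Y | f w = 0}.ncard ∧ 4 * {w ∈ X ∪ Y | f w = 0}.ncard ≤ N := by
    intro f hf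
    obtain ⟨⟨y, hyY, hfy⟩, ⟨x, hxX, hfx⟩⟩ := hslice f
    replace hfx := zmod_two_eq_zero_of_ne_one hfx
    replace hfy := zmod_two_eq_zero_of_ne_one hfy
    have hK := two_mul_nat_card_ker hf
    have hrestrict : 2 * ({x ∈ X | f x = 0}.ncard + {y ∈ Y | f y = 0}.ncard) ≤
        Nat.card (LinearMap.ker f) := by
      rw [← ncard_preimage_subtype_val_ker, ← ncard_preimage_subtype_val_ker]
      refine ih _ ?_ ⟨⟨x, hfx⟩, hxX⟩ ⟨⟨y, hfy⟩, hyY⟩ (hXY.preimage _)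
        (fun x hx y hy hxy => hsum x hx y hy (by simpa using hxy)) rfl
      have := Nat.card_pos (α := H)
      omega
    have hX₀ : 0 < {x ∈ X | f x = 0}.ncard := (Set.ncard_pos (Set.toFinite _)).mpr ⟨x, hxX, hfx⟩
    have hY₀ : 0 < {y ∈ Y | f y = 0}.ncard := (Set.ncard_pos (Set.toFinite _)).mpr ⟨y, hyY, hfy⟩
    have hsplit : {w ∈ X ∪ Y | f w = 0} = {x ∈ X | f x = 0} ∪ {y ∈ Y | f y = 0} := Set.sep_union
    rw [hsplit, Set.ncard_union_eq (hXY.mono (Set.sep_subset _ _) (Set.sep_subset _ _))]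
    omega
  obtain ⟨x, hx⟩ := hX
  obtain ⟨f, hf⟩ := exists_dual_apply_eq_one (ne_of_mem_of_not_mem (Or.inl hx) h0)
  have hf0 : f ≠ 0 := fun h => by simp [h] at hf
  obtain ⟨h2, h4⟩ := hker f hf0
  rw [← Set.ncard_union_eq hXY]
  exact two_mul_ncard_le_of_forall_ker h0 (by omega) fun f hf => hN ▸ (hker f hf).2

end Hyperplanes

namespace SimpleGraph

variable {V : Type*} (Γ : SimpleGraph V)

/-- The sizes of the matchings of `Γ`, so that `sSup Γ.matchingSizes` is its matching number. -/
def matchingSizes : Set ℕ :=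
  {n | ∃ M : Set (Sym2 V), M ⊆ Γ.edgeSet ∧
    (∀ e ∈ M, ∀ f ∈ M, e ≠ f → ∀ v, v ∈ e → v ∉ f) ∧ M.ncard = n}

variable {Γ}

lemma bddAbove_matchingSizes [Finite V] : BddAbove Γ.matchingSizes :=
  ⟨Nat.card (Sym2 V), by
    rintro n ⟨M, -, -, rfl⟩
    exact (Set.ncard_le_ncard (Set.subset_univ M)).trans_eq (Set.ncard_univ _)⟩

lemma mem_matchingSizes_of_sSup_eq [Finite V] {n : ℕ} (h : sSup Γ.matchingSizes = n) :
    n ∈ Γ.matchingSizes :=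
  h ▸ Nat.sSup_mem ⟨0, ∅, Set.empty_subset _, by simp, Set.ncard_empty _⟩ bddAbove_matchingSizes

lemma exists_adj_adj_of_two_mem_matchingSizes (h : 2 ∈ Γ.matchingSizes) :
    ∃ a b c d, Γ.Adj a b ∧ Γ.Adj c d ∧ [a, b, c, d].Nodup := by
  obtain ⟨M, hM, hdisj, hcard⟩ := h
  obtain ⟨e, f, hef, rfl⟩ := Set.ncard_eq_two.mp hcard
  induction e with | h a b => ?_
  induction f with | h c d => ?_
  have hab : Γ.Adj a b := hM (Set.mem_insert _ _)
  have hcd : Γ.Adj c d := hM (Set.mem_insert_of_mem _ rfl)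
  have hd := hdisj _ (Set.mem_insert _ _) _ (Set.mem_insert_of_mem _ rfl) hef
  refine ⟨a, b, c, d, hab, hcd, ?_⟩
  simp only [Sym2.mem_iff] at hd
  simp only [List.nodup_cons, List.mem_cons, List.not_mem_nil]
  grind [hab.ne, hcd.ne]

lemma three_mem_matchingSizes {x₁ y₁ x₂ y₂ x₃ y₃ : V} (h₁ : Γ.Adj x₁ y₁) (h₂ : Γ.Adj x₂ y₂)
    (h₃ : Γ.Adj x₃ y₃) (hnd : [x₁, y₁, x₂, y₂, x₃, y₃].Nodup) : 3 ∈ Γ.matchingSizes := by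
  simp only [List.nodup_cons, List.mem_cons, List.not_mem_nil] at hnd
  refine ⟨{s(x₁, y₁), s(x₂, y₂), s(x₃, y₃)}, ?_, ?_, ?_⟩
  · rintro e (rfl | rfl | rfl) <;> assumption
  · rintro e (rfl | rfl | rfl) f (rfl | rfl | rfl) hef v <;> simp only [Sym2.mem_iff] <;> grind
  · rw [Set.ncard_insert_of_notMem, Set.ncard_pair] <;> simp <;> grind

variable {a b c d : V}

lemma mem_of_adj_of_three_notMem_matchingSizes (h3 : 3 ∉ Γ.matchingSizes) (hab : Γ.Adj a b)
    (hcd : Γ.Adj c d) (hnd : [a, b, c, d].Nodup) {v w : V} (hvw : Γ.Adj v w)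
    (hv : v ∉ [a, b, c, d]) : w ∈ [a, b, c, d] := by
  by_contra hw
  refine h3 (three_mem_matchingSizes hvw hab hcd ?_)
  simp only [List.nodup_cons, List.mem_cons, List.not_mem_nil] at hnd hv hw ⊢
  grind [hvw.ne]

lemma exists_star_of_three_notMem_matchingSizes (h3 : 3 ∉ Γ.matchingSizes) (hcd : Γ.Adj c d)
    (hnd : [a, b, c, d].Nodup) :
    ∃ α β, ((α = a ∧ β = b) ∨ (α = b ∧ β = a)) ∧
      ∀ v ∉ [a, b, c, d], Γ.Adj v a ∨ Γ.Adj v b → Γ.Adj v α := by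
  by_cases hp : ∃ p ∉ [a, b, c, d], Γ.Adj p b ∧ ¬ Γ.Adj p a
  · obtain ⟨p, hp, hpb, hpa⟩ := hp
    -- a second outside neighbour `v` of `a` would give the matching `{v a, p b, c d}`
    refine ⟨b, a, .inr ⟨rfl, rfl⟩, fun v hv hva => hva.resolve_left fun hva => ?_⟩
    refine h3 (three_mem_matchingSizes hva hpb hcd ?_)
    simp only [List.nodup_cons, List.mem_cons, List.not_mem_nil] at hnd hv hp ⊢
    grind [hva.ne, hpb.ne]
  · push Not at hp
    exact ⟨a, b, .inl ⟨rfl, rfl⟩, fun v hv hva => hva.elim id (hp v hv)⟩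

theorem exists_two_stars_of_sSup_matchingSizes_eq_two [Finite V]
    (h : sSup Γ.matchingSizes = 2) :
    ∃ α β γ δ, Γ.Adj α β ∧ Γ.Adj γ δ ∧ [α, β, γ, δ].Nodup ∧
      ∀ v w, Γ.Adj v w → v ≠ α → v ≠ γ → Γ.Adj α v ∨ Γ.Adj γ v := by
  have h3 : 3 ∉ Γ.matchingSizes := fun h3 => by
    have := le_csSup bddAbove_matchingSizes h3
    omega
  obtain ⟨a, b, c, d, hab, hcd, hnd⟩ :=
    exists_adj_adj_of_two_mem_matchingSizes (mem_matchingSizes_of_sSup_eq h)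
  have hperm : [a, b, c, d].Perm [c, d, a, b] := List.perm_append_comm (l₁ := [a, b]) (l₂ := [c, d])
  obtain ⟨α, β, hαβ, hα⟩ := exists_star_of_three_notMem_matchingSizes h3 hcd hnd
  obtain ⟨γ, δ, hγδ, hγ⟩ :=
    exists_star_of_three_notMem_matchingSizes h3 hab (hperm.nodup_iff.mp hnd)
  have hne := hnd
  simp only [List.nodup_cons, List.mem_cons, List.not_mem_nil] at hne
  have hαβ' : Γ.Adj α β := by
    rcases hαβ with ⟨rfl, rfl⟩ | ⟨rfl, rfl⟩
    exacts [hab, hab.symm]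
  have hγδ' : Γ.Adj γ δ := by
    rcases hγδ with ⟨rfl, rfl⟩ | ⟨rfl, rfl⟩
    exacts [hcd, hcd.symm]
  refine ⟨α, β, γ, δ, hαβ', hγδ', ?_, fun v w hvw hvα hvγ => ?_⟩
  · simp only [List.nodup_cons, List.mem_cons, List.not_mem_nil, List.nodup_nil]
    grind
  by_cases hv : v ∈ [a, b, c, d]
  · simp only [List.mem_cons, List.not_mem_nil] at hv
    grind
  have hv' : v ∉ [c, d, a, b] := mt hperm.mem_iff.mpr hv
  have hw := mem_of_adj_of_three_notMem_matchingSizes h3 hab hcd hnd hvw hv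
  simp only [List.mem_cons, List.not_mem_nil, or_false] at hw
  rcases hw with rfl | rfl | rfl | rfl
  · exact .inl (hα v hv (.inl hvw)).symm
  · exact .inl (hα v hv (.inr hvw)).symm
  · exact .inr (hγ v hv' (.inl hvw)).symm
  · exact .inr (hγ v hv' (.inr hvw)).symm

end SimpleGraph

section PairShift

variable {G : Type*} [AddCommGroup G] [Module (ZMod 2) G]

lemma add_add_mem_pair {α γ t₁ t₂ t₃ : G} (h₁ : t₁ ∈ ({α, γ} : Set G))
    (h₂ : t₂ ∈ ({α, γ} : Set G)) (h₃ : t₃ ∈ ({α, γ} : Set G)) :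
    t₁ + t₂ + t₃ ∈ ({α, γ} : Set G) := by
  simp only [Set.mem_insert_iff, Set.mem_singleton_iff] at h₁ h₂ h₃ ⊢
  rcases h₁ with rfl | rfl <;> rcases h₂ with rfl | rfl <;> rcases h₃ with rfl | rfl <;>
    simp [ZModModule.add_self, add_assoc, add_left_comm]

lemma eq_add_add_of_mem_pair_of_ne {α γ t t' : G} (ht : t ∈ ({α, γ} : Set G))
    (ht' : t' ∈ ({α, γ} : Set G)) (htt : t ≠ t') : t' = α + γ + t := by
  simp only [Set.mem_insert_iff, Set.mem_singleton_iff] at ht ht'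
  rcases ht with rfl | rfl <;> rcases ht' with rfl | rfl
  · exact absurd rfl htt
  · rw [add_comm, ZModModule.add_add_cancel_left]
  · rw [add_assoc, ZModModule.add_self, add_zero]
  · exact absurd rfl htt

variable [Finite G]

lemma ncard_setOf_exists_pair_add_mem {α γ : G} {L : Set G} (h : ∀ l ∈ L, α + γ + l ∉ L) :
    {x | ∃ t ∈ ({α, γ} : Set G), t + x ∈ L}.ncard = 2 * L.ncard := by
  have hset : {x | ∃ t ∈ ({α, γ} : Set G), t + x ∈ L} = (α + ·) ⁻¹' L ∪ (γ + ·) ⁻¹' L := by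
    ext x
    simp
  have hdisj : Disjoint ((α + ·) ⁻¹' L) ((γ + ·) ⁻¹' L) := Set.disjoint_left.mpr fun x hx hx' =>
    h _ hx (by rwa [add_comm α γ, add_assoc, ZModModule.add_add_cancel_left])
  have hpre : ∀ t : G, ((t + ·) ⁻¹' L).ncard = L.ncard := fun t =>
    Set.ncard_preimage_of_injective_subset_range (add_right_injective t)
      fun y _ => ⟨t + y, ZModModule.add_add_cancel_left t y⟩
  rw [hset, Set.ncard_union_eq hdisj, hpre, hpre, two_mul]

theorem four_mul_ncard_le_of_add_ne_add {α γ : G} {S L : Set G} (hLS : L ⊆ S)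
    (hL : L.Nonempty) (hSL : (S \ L).Nonempty) (hshift : ∀ s ∈ S, α + γ + s ∉ S)
    (hsum : ∀ l₁ ∈ L, ∀ l₂ ∈ S \ L, ∀ s ∈ S, ∀ t ∈ ({α, γ} : Set G), l₁ + l₂ ≠ s + t) :
    4 * S.ncard ≤ Nat.card G := by
  set X := {x | ∃ t ∈ ({α, γ} : Set G), t + x ∈ L}
  set Y := {y | ∃ t ∈ ({α, γ} : Set G), t + y ∈ S \ L}
  have hX : X.Nonempty :=
    let ⟨l, hl⟩ := hL
    ⟨α + l, α, .inl rfl, by rwa [ZModModule.add_add_cancel_left]⟩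
  have hY : Y.Nonempty :=
    let ⟨l, hl⟩ := hSL
    ⟨α + l, α, .inl rfl, by rwa [ZModModule.add_add_cancel_left]⟩
  have hXY : Disjoint X Y := by
    rw [Set.disjoint_left]
    rintro x ⟨t, ht, hx⟩ ⟨t', ht', hy⟩
    by_cases htt : t = t'
    · exact hy.2 (htt ▸ hx)
    · refine hshift _ (hLS hx) ?_
      rw [← add_assoc, ← eq_add_add_of_mem_pair_of_ne ht ht' htt]
      exact hy.1
  have hXYsum : ∀ x ∈ X, ∀ y ∈ Y, x + y ∉ X ∪ Y := by
    rintro x ⟨t₁, ht₁, hx⟩ y ⟨t₂, ht₂, hy⟩ hxy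
    obtain ⟨t₃, ht₃, hxyS⟩ : ∃ t ∈ ({α, γ} : Set G), t + (x + y) ∈ S := by
      rcases hxy with ⟨t, ht, h⟩ | ⟨t, ht, h⟩
      exacts [⟨t, ht, hLS h⟩, ⟨t, ht, h.1⟩]
    refine hsum _ hx _ hy _ hxyS _ (add_add_mem_pair ht₁ ht₂ ht₃) ?_
    calc (t₁ + x) + (t₂ + y) = (t₁ + x) + (t₂ + y) + (t₃ + t₃) := by
          rw [ZModModule.add_self, add_zero]
      _ = (t₃ + (x + y)) + (t₁ + t₂ + t₃) := by abel
  have hcard := two_mul_ncard_add_ncard_le hX hY hXY hXYsum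
  rw [ncard_setOf_exists_pair_add_mem fun l hl h => hshift l (hLS hl) (hLS h),
    ncard_setOf_exists_pair_add_mem fun l hl h => hshift l hl.1 h.1, ← mul_add, ← mul_assoc,
    add_comm, Set.ncard_sdiff_add_ncard_of_subset hLS] at hcard
  exact hcard

end PairShift

section UniqueRepresentation

variable {G : Type*} [AddCommGroup G] {A : Set G}

def IsRound (A : Set G) : Prop := ∀ B, B ⊂ A → B + B ≠ A + A

lemma gam_adj {x y : G} : (gam A).Adj x y ↔ x ≠ y ∧ x ∈ A ∧ y ∈ A ∧ x + y ∈ urep A := by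
  rw [gam, SimpleGraph.fromRel_adj, add_comm y x]
  tauto

lemma eq_and_eq_or_of_mem_urep {d x y z w : G} (hd : d ∈ urep A) (hx : x ∈ A) (hy : y ∈ A)
    (hz : z ∈ A) (hw : w ∈ A) (hxy : x + y = d) (hzw : z + w = d) :
    (z = x ∧ w = y) ∨ (z = y ∧ w = x) := by
  obtain ⟨a₁, -, a₂, -, -, huniq⟩ := hd
  rcases huniq x hx y hy hxy with ⟨rfl, rfl⟩ | ⟨rfl, rfl⟩ <;>
    rcases huniq z hz w hw hzw with ⟨rfl, rfl⟩ | ⟨rfl, rfl⟩ <;> tauto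

lemma add_ne_add_of_gam_adj {t l s s' : G} (h : (gam A).Adj t l) (hs : s ∈ A) (hs' : s' ∈ A)
    (hst : s ≠ t) (hs't : s' ≠ t) : t + l ≠ s + s' := by
  obtain ⟨-, ht, hl, hd⟩ := gam_adj.mp h
  intro heq
  rcases eq_and_eq_or_of_mem_urep hd ht hl hs hs' rfl heq.symm with ⟨h, -⟩ | ⟨-, h⟩
  exacts [hst h, hs't h]

variable [Module (ZMod 2) G]

lemma IsRound.exists_gam_adj (hA : IsRound A) (h1 : 1 < A.ncard) {a : G} (ha : a ∈ A) :
    ∃ b, (gam A).Adj a b := by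
  obtain ⟨b₀, hb₀, hb₀a⟩ := Set.exists_ne_of_one_lt_ncard h1 a
  obtain ⟨d, hd, hdB⟩ : ∃ d ∈ A + A, d ∉ (A \ {a}) + (A \ {a}) := by
    by_contra! h
    exact hA _ (Set.sdiff_singleton_ssubset.mpr ha)
      (subset_antisymm (Set.add_subset_add Set.sdiff_subset Set.sdiff_subset) h)
  have hrep : ∀ z ∈ A, ∀ w ∈ A, z + w = d → z = a ∨ w = a := by
    intro z hz w hw hzw
    by_contra! h
    exact hdB ⟨z, ⟨hz, h.1⟩, w, ⟨hw, h.2⟩, hzw⟩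
  obtain ⟨y, hy, rfl⟩ : ∃ y ∈ A, a + y = d := by
    obtain ⟨x, hx, y, hy, rfl⟩ := Set.mem_add.mp hd
    rcases hrep x hx y hy rfl with rfl | rfl
    exacts [⟨y, hy, rfl⟩, ⟨x, hx, add_comm _ _⟩]
  have hya : y ≠ a := by
    rintro rfl
    exact hdB ⟨b₀, ⟨hb₀, hb₀a⟩, b₀, ⟨hb₀, hb₀a⟩, by simp [ZModModule.add_self]⟩
  refine ⟨y, gam_adj.mpr ⟨hya.symm, ha, hy, a, ha, y, hy, rfl, fun z hz w hw hzw => ?_⟩⟩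
  rcases hrep z hz w hw hzw with rfl | rfl
  · exact .inl ⟨rfl, add_left_cancel hzw⟩
  · exact .inr ⟨add_right_cancel (hzw.trans (add_comm _ _)), rfl⟩

variable {α γ : G}

lemma add_add_notMem_sdiff_pair (hα : α ∈ A) (hγ : γ ∈ A) (hαγ : α ≠ γ)
    (hcover : ∀ s ∈ A, s ≠ α → s ≠ γ → (gam A).Adj α s ∨ (gam A).Adj γ s)
    {s : G} (hs : s ∈ A \ {α, γ}) : α + γ + s ∉ A \ {α, γ} := by
  rintro ⟨hs'A, hs'⟩
  obtain ⟨hsA, hs⟩ := hs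
  simp only [Set.mem_insert_iff, Set.mem_singleton_iff, not_or] at hs hs'
  rcases hcover s hsA hs.1 hs.2 with h | h
  · refine add_ne_add_of_gam_adj h hγ hs'A hαγ.symm hs'.1 ?_
    rw [add_comm α γ, add_assoc, ZModModule.add_add_cancel_left]
  · refine add_ne_add_of_gam_adj h hα hs'A hαγ hs'.2 ?_
    rw [add_assoc, ZModModule.add_add_cancel_left]

lemma add_ne_add_of_gam_adj_of_gam_adj {l₁ l₂ s t : G} (h₁ : (gam A).Adj α l₁)
    (h₂ : (gam A).Adj γ l₂) (hl₁ : l₁ ∈ A \ {α, γ}) (hl₂ : l₂ ∈ A \ {α, γ})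
    (hs : s ∈ A \ {α, γ}) (ht : t ∈ ({α, γ} : Set G)) : l₁ + l₂ ≠ s + t := by
  obtain ⟨hl₁A, hl₁⟩ := hl₁
  obtain ⟨hl₂A, hl₂⟩ := hl₂
  obtain ⟨hsA, hs⟩ := hs
  simp only [Set.mem_insert_iff, Set.mem_singleton_iff, not_or] at hl₁ hl₂ hs ht
  rintro heq
  rcases ht with rfl | rfl
  · refine add_ne_add_of_gam_adj h₁ hsA hl₂A hs.1 hl₂.1 ?_
    rw [ZModModule.add_eq_add_iff_add_eq_add, heq, add_comm]
  · refine add_ne_add_of_gam_adj h₂ hsA hl₁A hs.2 hl₁.2 ?_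
    rw [ZModModule.add_eq_add_iff_add_eq_add, add_comm l₂, heq, add_comm]

theorem four_mul_ncard_le_of_gam_adj_or_gam_adj [Finite G] {β δ : G}
    (hβ : (gam A).Adj α β) (hδ : (gam A).Adj γ δ) (hnd : [α, β, γ, δ].Nodup)
    (hcover : ∀ s ∈ A, s ≠ α → s ≠ γ → (gam A).Adj α s ∨ (gam A).Adj γ s) :
    4 * A.ncard ≤ Nat.card G + 8 := by
  simp only [List.nodup_cons, List.mem_cons, List.not_mem_nil, List.nodup_nil, or_false,
    not_or] at hnd
  obtain ⟨⟨-, hαγ, hαδ⟩, ⟨hβγ, hβδ⟩, -⟩ := hnd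
  obtain ⟨-, hαA, hβA, -⟩ := gam_adj.mp hβ
  obtain ⟨-, hγA, hδA, -⟩ := gam_adj.mp hδ
  set S := A \ {α, γ}
  have hβS : β ∈ S := ⟨hβA, by rintro (h | h); exacts [hβ.ne h.symm, hβγ h]⟩
  have hδS : δ ∈ S := ⟨hδA, by rintro (h | h); exacts [hαδ h.symm, hδ.ne h.symm]⟩
  set L := {s ∈ S | (gam A).Adj α s ∧ s ≠ δ}
  have hγL : ∀ s ∈ S \ L, (gam A).Adj γ s := by
    rintro s ⟨hs, hsL⟩
    by_cases hsδ : s = δ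
    · exact hsδ ▸ hδ
    exact (hcover s hs.1 (fun h => hs.2 (.inl h)) (fun h => hs.2 (.inr h))).resolve_left
      fun h => hsL ⟨hs, h, hsδ⟩
  have hS := four_mul_ncard_le_of_add_ne_add (Set.sep_subset S _) ⟨β, hβS, hβ, hβδ⟩
    ⟨δ, hδS, fun h => h.2.2 rfl⟩ (fun s => add_add_notMem_sdiff_pair hαA hγA hαγ hcover)
    fun l₁ hl₁ l₂ hl₂ s hs t ht =>
      add_ne_add_of_gam_adj_of_gam_adj hl₁.2.1 (hγL l₂ hl₂) hl₁.1 hl₂.1 hs ht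
  have hSA : S.ncard + ({α, γ} : Set G).ncard = A.ncard :=
    Set.ncard_sdiff_add_ncard_of_subset (Set.insert_subset hαA (Set.singleton_subset_iff.mpr hγA))
  rw [Set.ncard_pair hαγ] at hSA
  omega

end UniqueRepresentation

theorem stmt_18_general (r : ℕ) (A : Set (Fin r → ZMod 2))
    (hround : ∀ B : Set (Fin r → ZMod 2), B ⊂ A → B + B ≠ A + A)
    (hsize : 2 ^ r + 12 < 4 * A.ncard) :
    sSup {n : ℕ | ∃ M : Set (Sym2 (Fin r → ZMod 2)), M ⊆ (gam A).edgeSet ∧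
      (∀ e ∈ M, ∀ f ∈ M, e ≠ f → ∀ v, v ∈ e → v ∉ f) ∧ M.ncard = n} ≠ 2 := by
  intro h
  obtain ⟨α, β, γ, δ, hβ, hδ, hnd, hcover⟩ :=
    SimpleGraph.exists_two_stars_of_sSup_matchingSizes_eq_two h
  have hA : 1 < A.ncard := by
    have := Nat.one_le_two_pow (n := r)
    omega
  have hbound := four_mul_ncard_le_of_gam_adj_or_gam_adj hβ hδ hnd fun s hs hsα hsγ =>
    have ⟨w, hw⟩ := IsRound.exists_gam_adj hround hA hs
    hcover s w hw hsα hsγ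
  simp only [Nat.card_eq_fintype_card, Fintype.card_fun, ZMod.card, Fintype.card_fin] at hbound
  omega

/-- **Lemma.** Let `r ≥ 1`. If `A ⊆ G = Fin r → ZMod 2` is round with `|A| > 2^(r-2) + 3`
(stated as `4·|A| > 2^r + 12`), then the matching number of `Γ(A)` is not equal to 2. -/
theorem stmt_18 (r : ℕ) (hr : 1 ≤ r) (A : Set (Fin r → ZMod 2))
    (hround : ∀ B : Set (Fin r → ZMod 2), B ⊂ A → B + B ≠ A + A)
    (hsize : 2 ^ r + 12 < 4 * A.ncard) :
    sSup {n : ℕ | ∃ M : Set (Sym2 (Fin r → ZMod 2)), M ⊆ (gam A).edgeSet ∧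
      (∀ e ∈ M, ∀ f ∈ M, e ≠ f → ∀ v, v ∈ e → v ∉ f) ∧ M.ncard = n} ≠ 2 :=
  stmt_18_general r A hround hsize
end
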